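/- For every α > (23/28)·log 2 + (1/28)·log 29 (= 0.6648…), one has #S_N ≤ e^{αN} for all sufficiently large positive integers N. -/

import Mathlib

/-- `S_N`: the set of values of signed harmonic sums of length `N`. -/
def SN (N : ℕ) : Set ℝ :=
  {x : ℝ | ∃ s : Fin N → ℝ, (∀ i, s i = 1 ∨ s i = -1) ∧
    x = ∑ i : Fin N, s i / ((i : ℕ) + 1)}

open Finset Pointwise Real Filter

/-!
Since `1/d = 1/(2d) + 1/(3d) + 1/(6d)`, the signed sums over a quadruple `{d, 2d, 3d, 6d}` take
at most 13 of the 16 conceivable values. For `d` coprime to `6` these quadruples are pairwise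
disjoint, and `d ≡ ±1 (mod 6)` with `6d ≤ N` gives about `N/18` of them inside `[1, N]`. Signed
sums over a disjoint union form the sumset of the parts, so
`#S_N ≤ 13^(N/18) · 2^(N - 4N/18) = e^((log 2 - log(16/13)/18) N + O(1))`, and
`log 2 - log(16/13)/18` is below the threshold because `13^28 < 2^22 · 29^18`.
-/

def signedSums {ι : Type*} (w : ι → ℝ) (T : Finset ι) : Set ℝ :=
  {x | ∃ s : ι → ℝ, (∀ i, s i = 1 ∨ s i = -1) ∧ x = ∑ i ∈ T, s i * w i}

section SignedSums

variable {ι : Type*} (w : ι → ℝ)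

lemma signedSums_empty : signedSums w ∅ = {0} := by
  ext x
  simp only [signedSums, sum_empty, Set.mem_ofPred_eq, Set.mem_singleton_iff]
  exact ⟨fun ⟨_, _, hx⟩ => hx, fun hx => ⟨fun _ => 1, fun _ => Or.inl rfl, hx⟩⟩

lemma signedSums_union [DecidableEq ι] {T U : Finset ι} (h : Disjoint T U) :
    signedSums w (T ∪ U) = signedSums w T + signedSums w U := by
  ext x
  constructor
  · rintro ⟨s, hs, rfl⟩
    exact ⟨_, ⟨s, hs, rfl⟩, _, ⟨s, hs, rfl⟩, (sum_union h).symm⟩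
  · rintro ⟨_, ⟨s, hs, rfl⟩, _, ⟨t, ht, rfl⟩, rfl⟩
    refine ⟨fun i => if i ∈ T then s i else t i,
      fun i => by dsimp only; split_ifs; exacts [hs i, ht i], ?_⟩
    rw [sum_union h]
    congr 1
    · exact sum_congr rfl fun i hi => by simp [hi]
    · exact sum_congr rfl fun i hi => by simp [disjoint_right.1 h hi]

lemma ncard_signedSums_singleton_le (i : ι) : (signedSums w {i}).ncard ≤ 2 := by
  have hsub : signedSums w {i} ⊆ {w i, -w i} := by
    rintro x ⟨s, hs, rfl⟩
    rcases hs i with h | h <;> simp [h]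
  calc (signedSums w {i}).ncard ≤ ({w i, -w i} : Set ℝ).ncard :=
        Set.ncard_le_ncard hsub (Set.toFinite _)
    _ ≤ ({-w i} : Set ℝ).ncard + 1 := Set.ncard_insert_le _ _
    _ = 2 := by rw [Set.ncard_singleton]

lemma ncard_signedSums_biUnion_le [DecidableEq ι] {κ : Type*} (D : Finset κ)
    (f : κ → Finset ι) (hf : (D : Set κ).PairwiseDisjoint f) :
    (signedSums w (D.biUnion f)).ncard ≤ ∏ d ∈ D, (signedSums w (f d)).ncard := by
  classical
  induction D using Finset.induction_on with
  | empty => simp [signedSums_empty]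
  | insert a D ha ih =>
    have hdisj : Disjoint (f a) (D.biUnion f) :=
      (disjoint_biUnion_right _ _ _).2 fun d hd =>
        hf (mem_insert_self a D) (mem_insert_of_mem hd) (ne_of_mem_of_not_mem hd ha).symm
    rw [biUnion_insert, prod_insert ha, signedSums_union w hdisj]
    calc (signedSums w (f a) + signedSums w (D.biUnion f)).ncard
        ≤ (signedSums w (f a)).ncard * (signedSums w (D.biUnion f)).ncard := by
          simpa only [Nat.card_coe_set_eq] using Set.natCard_add_le
      _ ≤ _ := Nat.mul_le_mul_left _ (ih (hf.subset (by simp)))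

lemma ncard_signedSums_le [DecidableEq ι] (T : Finset ι) :
    (signedSums w T).ncard ≤ 2 ^ T.card := by
  have h := ncard_signedSums_biUnion_le w T singleton
    fun _ _ _ _ hij => disjoint_singleton.2 hij
  rw [biUnion_singleton_eq_self] at h
  exact h.trans (prod_le_pow_card _ _ _ fun i _ => ncard_signedSums_singleton_le w i)

end SignedSums

lemma sum_Icc_one_eq_sum_fin {M : Type*} [AddCommMonoid M] (N : ℕ) (f : ℕ → M) :
    ∑ i ∈ Icc 1 N, f i = ∑ i : Fin N, f (i + 1) := by
  rw [Fin.sum_univ_eq_sum_range (fun i => f (i + 1)), range_eq_Ico, sum_Ico_add',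
    zero_add, Ico_add_one_right_eq_Icc]

lemma SN_eq_signedSums (N : ℕ) : SN N = signedSums (fun i : ℕ => (i : ℝ)⁻¹) (Icc 1 N) := by
  ext x
  constructor
  · rintro ⟨s, hs, rfl⟩
    refine ⟨fun n => if h : n - 1 < N then s ⟨n - 1, h⟩ else 1,
      fun n => by dsimp only; split_ifs; exacts [hs _, Or.inl rfl], ?_⟩
    rw [sum_Icc_one_eq_sum_fin]
    exact sum_congr rfl fun i _ => by simp [div_eq_mul_inv]
  · rintro ⟨t, ht, rfl⟩
    exact ⟨fun i => t (i + 1), fun i => ht _, by simp [sum_Icc_one_eq_sum_fin, div_eq_mul_inv]⟩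

def quadruple (d : ℕ) : Finset ℕ := {d, 2 * d, 3 * d, 6 * d}

lemma card_quadruple {d : ℕ} (hd : d ≠ 0) : (quadruple d).card = 4 := by
  rw [quadruple, card_insert_of_notMem (by simp; omega), card_insert_of_notMem (by simp; omega),
    card_pair (by omega)]

lemma disjoint_quadruple {d e : ℕ} (hd : d.Coprime 6) (he : e.Coprime 6) (hde : d ≠ e) :
    Disjoint (quadruple d) (quadruple e) := by
  have hndvd {n p : ℕ} (hn : n.Coprime 6) (hp : p.Prime) (hp6 : p ∣ 6) : ¬ p ∣ n :=
    (hp.coprime_iff_not_dvd).1 (hn.coprime_dvd_right hp6).symm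
  have := hndvd hd Nat.prime_two (by norm_num)
  have := hndvd hd Nat.prime_three (by norm_num)
  have := hndvd he Nat.prime_two (by norm_num)
  have := hndvd he Nat.prime_three (by norm_num)
  simp only [quadruple, disjoint_left, mem_insert, mem_singleton]
  omega

lemma ncard_signedSums_quadruple_le {d : ℕ} (hd : d ≠ 0) :
    (signedSums (fun i : ℕ => (i : ℝ)⁻¹) (quadruple d)).ncard ≤ 13 := by
  -- `6d · x = 6a + 3b + 2c + e` for signs `a, b, c, e`
  set E : Finset ℝ := {-12, -10, -8, -6, -4, -2, 0, 2, 4, 6, 8, 10, 12}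
  have hsub :
      signedSums (fun i : ℕ => (i : ℝ)⁻¹) (quadruple d) ⊆ E.image (· / (6 * (d : ℝ))) := by
    rintro x ⟨s, hs, rfl⟩
    have hd' : (d : ℝ) ≠ 0 := Nat.cast_ne_zero.2 hd
    have hsum : ∑ i ∈ quadruple d, s i * (i : ℝ)⁻¹ =
        (6 * s d + 3 * s (2 * d) + 2 * s (3 * d) + s (6 * d)) / (6 * d) := by
      rw [quadruple, sum_insert (by simp; omega), sum_insert (by simp; omega),
        sum_pair (by omega)]
      push_cast
      field_simp
      ring
    rw [hsum, coe_image]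
    refine Set.mem_image_of_mem _ ?_
    rcases hs d with h1 | h1 <;> rcases hs (2 * d) with h2 | h2 <;>
      rcases hs (3 * d) with h3 | h3 <;> rcases hs (6 * d) with h6 | h6 <;>
      norm_num [E, h1, h2, h3, h6]
  calc _ ≤ (E.image (· / (6 * (d : ℝ)))).card :=
        (Set.ncard_le_ncard hsub (finite_toSet _)).trans_eq (Set.ncard_coe_finset _)
    _ ≤ E.card := card_image_le
    _ = 13 := by norm_num [E]

lemma ncard_signedSums_biUnion_quadruple_le {D : Finset ℕ} (hD : ∀ d ∈ D, d.Coprime 6) :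
    (signedSums (fun i : ℕ => (i : ℝ)⁻¹) (D.biUnion quadruple)).ncard ≤ 13 ^ D.card :=
  (ncard_signedSums_biUnion_le _ D quadruple
    fun d hd e he hde => disjoint_quadruple (hD d hd) (hD e he) hde).trans
    (prod_le_pow_card _ _ _ fun d hd => ncard_signedSums_quadruple_le (by
      rintro rfl; simpa using hD 0 hd))

lemma card_biUnion_quadruple {D : Finset ℕ} (hD : ∀ d ∈ D, d.Coprime 6) :
    (D.biUnion quadruple).card = 4 * D.card := by
  rw [card_biUnion fun d hd e he hde => disjoint_quadruple (hD d hd) (hD e he) hde,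
    sum_const_nat fun d hd => card_quadruple (by rintro rfl; simpa using hD 0 hd), mul_comm]

lemma ncard_SN_le (N : ℕ) : (SN N).ncard ≤ 13 ^ (2 * (N / 36)) * 2 ^ (N - 8 * (N / 36)) := by
  set J := N / 36
  set D : Finset ℕ := (range J ×ˢ {1, 5}).image fun p => 6 * p.1 + p.2
  have hD : ∀ d ∈ D, d.Coprime 6 := by
    simp only [D, mem_image, mem_product, mem_range, mem_insert, mem_singleton]
    rintro _ ⟨⟨j, r⟩, ⟨-, rfl | rfl⟩, rfl⟩ <;>
      exact (Nat.coprime_mul_left_add_left _ _ _).2 (by norm_num)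
  have hDcard : D.card = 2 * J := by
    rw [card_image_of_injOn, card_product, card_range, card_pair (by norm_num), mul_comm]
    rintro ⟨j, r⟩ h ⟨j', r'⟩ h' heq
    simp only [coe_product, coe_range, coe_insert, coe_singleton, Set.mem_prod, Set.mem_Iio,
      Set.mem_insert_iff, Set.mem_singleton_iff] at h h' heq
    ext <;> simp only <;> omega
  have hT : D.biUnion quadruple ⊆ Icc 1 N := by
    simp only [D, subset_iff, mem_biUnion, mem_image, mem_product, mem_range, mem_insert,
      mem_singleton, quadruple, mem_Icc]
    omega
  rw [SN_eq_signedSums, ← union_sdiff_of_subset hT, signedSums_union _ disjoint_sdiff]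
  calc _ ≤ (signedSums _ (D.biUnion quadruple)).ncard *
        (signedSums _ (Icc 1 N \ D.biUnion quadruple)).ncard := by
        simpa only [Nat.card_coe_set_eq] using Set.natCard_add_le
    _ ≤ 13 ^ D.card * 2 ^ (Icc 1 N \ D.biUnion quadruple).card :=
        Nat.mul_le_mul (ncard_signedSums_biUnion_quadruple_le hD) (ncard_signedSums_le _ _)
    _ = _ := by
        rw [card_sdiff_of_subset hT, Nat.card_Icc, card_biUnion_quadruple hD, hDcard]
        congr 2
        omega

lemma ncard_SN_le_exp (N : ℕ) :
    ((SN N).ncard : ℝ) ≤ exp ((log 2 - log (16 / 13) / 18) * N + 2 * log (16 / 13)) := by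
  set J := N / 36
  have hJ : (N : ℝ) / 18 - 2 ≤ 2 * J := by
    have : (N : ℝ) < 36 * J + 36 := by exact_mod_cast (show N < 36 * J + 36 by omega)
    linarith
  have hc : 0 < log (16 / 13) := log_pos (by norm_num)
  have h2 : (2 : ℝ) ^ N = 2 ^ (N - 8 * J) * 16 ^ (2 * J) := by
    rw [show (16 : ℝ) = 2 ^ 4 by norm_num, ← pow_mul, ← pow_add]
    congr 1
    omega
  calc ((SN N).ncard : ℝ) ≤ 13 ^ (2 * J) * 2 ^ (N - 8 * J) := by exact_mod_cast ncard_SN_le N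
    _ = 2 ^ N / (16 / 13) ^ (2 * J) := by
        rw [h2, div_pow]
        field_simp
    _ = exp (N * log 2 - (2 * J : ℕ) * log (16 / 13)) := by
        rw [exp_sub, ← log_pow, ← log_pow, exp_log (by positivity), exp_log (by positivity)]
    _ ≤ _ := exp_le_exp.2 (by push_cast; nlinarith)

lemma log_two_sub_lt : log 2 - log (16 / 13) / 18 < 23 / 28 * log 2 + 1 / 28 * log 29 := by
  have h : log ((13 : ℝ) ^ 28) < log ((2 : ℝ) ^ 22 * 29 ^ 18) :=
    log_lt_log (by positivity) (by norm_num)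
  have h16 : log (16 / 13 : ℝ) = 4 * log 2 - log 13 := by
    rw [log_div (by norm_num) (by norm_num), show (16 : ℝ) = 2 ^ 4 by norm_num, log_pow]
    push_cast
    ring
  rw [log_mul (by positivity) (by positivity), log_pow, log_pow, log_pow] at h
  push_cast at h
  linarith

lemma eventually_mul_add_le_mul {a b : ℝ} (hab : a < b) (c : ℝ) :
    ∀ᶠ N : ℕ in atTop, a * N + c ≤ b * N := by
  have h := tendsto_natCast_atTop_atTop.const_mul_atTop (sub_pos.2 hab)
  filter_upwards [h.eventually_ge_atTop c] with N hN
  linarith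

theorem statement7 (α : ℝ)
    (hα : α > (23 / 28) * Real.log 2 + (1 / 28) * Real.log 29) :
    ∃ N₀ : ℕ, ∀ N : ℕ, N₀ ≤ N → ((SN N).ncard : ℝ) ≤ Real.exp (α * N) := by
  obtain ⟨N₀, hN₀⟩ := eventually_atTop.1
    (eventually_mul_add_le_mul (log_two_sub_lt.trans hα) (2 * log (16 / 13)))
  exact ⟨N₀, fun N hN => (ncard_SN_le_exp N).trans (exp_le_exp.2 (hN₀ N hN))⟩
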